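/- Let w = (w1, w2) ∈ ℕ₊², let L1 be an affine automorphism of ℂ², and let T_1, …, T_l (l ≥ 2) be triangular maps alternating between the forms (x,y) ↦ (x, y + f_i(x)) and (x,y) ↦ (x + f_i(y), y) with deg f_i > 1, where T_1 is of the first form. Set (k1, k2) = weighted bidegree of T_1 ∘ L1. Then for l = 2, the weighted bidegree of T_2 ∘ T_1 ∘ L1 is (k2 · deg f_2, k2); and for l > 2, the weighted bidegree of T_l ∘ ⋯ ∘ T_1 ∘ L1 equals (k2 ∏_{i=2}^{l} deg f_i, k2 ∏_{i=2}^{l-1} deg f_i) if l is even, and (k2 ∏_{i=2}^{l-1} deg f_i, k2 ∏_{i=2}^{l} deg f_i) if l is odd. -/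

import Mathlib

open MvPolynomial

/-- A polynomial map of ℂ², given by its two component polynomials. -/
abbrev PolyMap : Type := MvPolynomial (Fin 2) ℂ × MvPolynomial (Fin 2) ℂ

/-- Composition of polynomial maps: (F ∘ G). -/
noncomputable def pcomp (F G : PolyMap) : PolyMap :=
  (MvPolynomial.aeval ![G.1, G.2] F.1, MvPolynomial.aeval ![G.1, G.2] F.2)

/-- `F` is a polynomial automorphism of ℂ²: it has a polynomial inverse. -/
def IsPolyAut (F : PolyMap) : Prop :=
  ∃ G : PolyMap, pcomp F G = (MvPolynomial.X 0, MvPolynomial.X 1) ∧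
    pcomp G F = (MvPolynomial.X 0, MvPolynomial.X 1)

/-- Weighted degree with `wdeg x = w1`, `wdeg y = w2` (0 on the zero polynomial). -/
noncomputable def wdeg (w1 w2 : ℕ) (p : MvPolynomial (Fin 2) ℂ) : ℕ :=
  p.support.sup fun α => α 0 * w1 + α 1 * w2

/-- An affine automorphism: an automorphism both of whose components have total degree 1. -/
def IsAffineAut (F : PolyMap) : Prop :=
  IsPolyAut F ∧ F.1.totalDegree = 1 ∧ F.2.totalDegree = 1

/-- The triangular map (x, y) ↦ (x, y + f(x)). -/
noncomputable def lowerT (f : Polynomial ℂ) : PolyMap :=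
  (MvPolynomial.X 0,
   MvPolynomial.X 1 + Polynomial.aeval (MvPolynomial.X 0 : MvPolynomial (Fin 2) ℂ) f)

/-- The triangular map (x, y) ↦ (x + f(y), y). -/
noncomputable def upperT (f : Polynomial ℂ) : PolyMap :=
  (MvPolynomial.X 0 + Polynomial.aeval (MvPolynomial.X 1 : MvPolynomial (Fin 2) ℂ) f,
   MvPolynomial.X 1)

/-- `chain L1 f l = T_l ∘ ⋯ ∘ T_1 ∘ L1`, where `T_i = lowerT (f i)` for odd `i`
and `T_i = upperT (f i)` for even `i`. -/
noncomputable def chain (L1 : PolyMap) (f : ℕ → Polynomial ℂ) : ℕ → PolyMap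
  | 0 => L1
  | i + 1 => pcomp (if i % 2 = 0 then lowerT (f (i + 1)) else upperT (f (i + 1))) (chain L1 f i)

/-!
Substituting `x ↦ t ^ w₁ • x`, `y ↦ t ^ w₂ • y` turns the weighted degree into the `t`-degree of
a polynomial with coefficients in the domain `ℂ[x, y]`; hence `deg_w g(p) = deg g · deg_w p`.
A triangular map replaces one component `q` by `q + g(p)`, where `p` is the other component;
when `deg_w q < deg_w p`, the new component has degree `deg g · deg_w p > deg_w p`, so the two
components take turns in being the larger one and their degrees multiply. The start `k₁ < k₂`
uses that `L1` is affine: if the linear second component `v` of `L1` is not dominated by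
`f₁(u)`, its top monomial is a variable `z` with `w_z > deg_w u`, so `z` does not occur in
`f₁(u)` and survives in `v + f₁(u)`.
-/

namespace MvPolynomial

variable {σ R : Type*}

section CommSemiring

variable [CommSemiring R] (w : σ → ℕ)

noncomputable def weightedScale : MvPolynomial σ R →ₐ[R] Polynomial (MvPolynomial σ R) :=
  aeval fun i => Polynomial.monomial (w i) (X i)

theorem weightedScale_monomial (d : σ →₀ ℕ) (r : R) :
    weightedScale w (monomial d r) = Polynomial.monomial (Finsupp.weight w d) (monomial d r) := by
  rw [weightedScale, aeval_monomial, monomial_eq, Finsupp.weight_apply]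
  simp only [← Polynomial.C_mul_X_pow_eq_monomial, mul_pow, ← pow_mul, Finsupp.prod, Finsupp.sum,
    Finset.prod_mul_distrib, ← Finset.prod_pow_eq_pow_sum, map_prod, map_pow, map_mul, smul_eq_mul,
    Polynomial.algebraMap_apply, algebraMap_eq, mul_comm (w _)]
  ring

theorem coeff_weightedScale (p : MvPolynomial σ R) (n : ℕ) :
    (weightedScale w p).coeff n = weightedHomogeneousComponent w n p := by
  classical
  induction p using induction_on' with
  | monomial d r =>
    rw [weightedScale_monomial, Polynomial.coeff_monomial]
    split_ifs with h
    · exact ((isWeightedHomogeneous_monomial w d r h).weightedHomogeneousComponent_same).symm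
    · exact ((isWeightedHomogeneous_monomial w d r rfl).weightedHomogeneousComponent_ne n
        (Ne.symm h)).symm
  | add p q hp hq => simp only [map_add, Polynomial.coeff_add, hp, hq]

theorem natDegree_weightedScale (p : MvPolynomial σ R) :
    (weightedScale w p).natDegree = weightedTotalDegree w p := by
  classical
  refine le_antisymm (Polynomial.natDegree_le_iff_coeff_eq_zero.2 fun n hn => ?_) ?_
  · rw [coeff_weightedScale]
    exact weightedHomogeneousComponent_eq_zero _ _ (by exact_mod_cast hn)
  · rcases eq_or_ne p 0 with rfl | hp
    · simp [weightedTotalDegree]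
    obtain ⟨d, hd, hdeg⟩ := Finset.exists_mem_eq_sup _ (support_nonempty.2 hp) (Finsupp.weight w)
    refine Polynomial.le_natDegree_of_ne_zero fun h => mem_support_iff.1 hd ?_
    rw [coeff_weightedScale, weightedTotalDegree, hdeg] at h
    simpa [coeff_weightedHomogeneousComponent] using congrArg (coeff d) h

theorem weightedTotalDegree_add_eq_right_of_lt {p q : MvPolynomial σ R}
    (h : weightedTotalDegree w p < weightedTotalDegree w q) :
    weightedTotalDegree w (p + q) = weightedTotalDegree w q := by
  simp only [← natDegree_weightedScale, map_add] at h ⊢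
  exact Polynomial.natDegree_add_eq_right_of_natDegree_lt h

variable {w}

theorem weightedTotalDegree_pos (hw : ∀ i, w i ≠ 0) {u : MvPolynomial σ R}
    (hu : 0 < u.totalDegree) : 0 < weightedTotalDegree w u := by
  refine Nat.pos_of_ne_zero fun h => hu.ne' ((totalDegree_eq_zero_iff (p := u)).2 ?_)
  exact (weightedTotalDegree_eq_zero_iff (nonTorsionWeight_of hw) u).1 h

theorem exists_single_mem_support_of_totalDegree_le_one {v : MvPolynomial σ R}
    (hv : v.totalDegree ≤ 1) (hv₀ : 0 < weightedTotalDegree w v) :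
    ∃ i, Finsupp.single i 1 ∈ v.support ∧ w i = weightedTotalDegree w v := by
  have hne : v.support.Nonempty :=
    support_nonempty.2 (by rintro rfl; simp [weightedTotalDegree] at hv₀)
  obtain ⟨d, hd, hdeg⟩ := Finset.exists_mem_eq_sup _ hne (Finsupp.weight w)
  have hd₀ : d ≠ 0 := by
    rintro rfl
    simp [weightedTotalDegree, hdeg] at hv₀
  have hd₁ : d.degree = 1 :=
    le_antisymm ((le_totalDegree hd).trans hv)
      (Nat.one_le_iff_ne_zero.2 ((Finsupp.degree_eq_zero_iff d).not.2 hd₀))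
  obtain ⟨i, rfl⟩ := (Finsupp.sum_eq_one_iff _).1 hd₁
  exact ⟨i, hd, by rw [weightedTotalDegree, hdeg, Finsupp.weight_single, one_smul]⟩

theorem mem_supported_compl_of_weightedTotalDegree_lt {u : MvPolynomial σ R} {i : σ}
    (hu : weightedTotalDegree w u < w i) : u ∈ supported R {i}ᶜ := by
  rw [mem_supported]
  rintro j hj rfl
  obtain ⟨d, hd, hjd⟩ := (mem_vars_iff_mem_support j).1 hj
  exact (Finsupp.le_weight_of_ne_zero' w (Finsupp.mem_support_iff.1 hjd)).trans
    (le_weightedTotalDegree w hd) |>.not_gt hu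

theorem coeff_single_eq_zero_of_mem_supported_compl {p : MvPolynomial σ R} {i : σ}
    (hp : p ∈ supported R {i}ᶜ) : coeff (Finsupp.single i 1) p = 0 := by
  by_contra h
  have hi := mem_supported.1 hp ((mem_vars_iff_mem_support i).2 ⟨_, mem_support_iff.2 h, by simp⟩)
  simp at hi

end CommSemiring

section Domain

variable [CommRing R] [IsDomain R] {w : σ → ℕ}

theorem weightedTotalDegree_aeval (q : MvPolynomial σ R) (g : Polynomial R) :
    weightedTotalDegree w (Polynomial.aeval q g) = g.natDegree * weightedTotalDegree w q := by
  rw [← natDegree_weightedScale, ← natDegree_weightedScale, ← Polynomial.aeval_algHom_apply,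
    ← Polynomial.aeval_map_algebraMap (MvPolynomial σ R), ← Polynomial.comp_eq_aeval,
    Polynomial.natDegree_comp, algebraMap_eq,
    Polynomial.natDegree_map_eq_of_injective (C_injective σ R)]

theorem weightedTotalDegree_add_aeval_of_lt {p q : MvPolynomial σ R} {g : Polynomial R}
    (h : weightedTotalDegree w q < weightedTotalDegree w p) (hg : 0 < g.natDegree) :
    weightedTotalDegree w (q + Polynomial.aeval p g) = g.natDegree * weightedTotalDegree w p := by
  have hlt : weightedTotalDegree w q < weightedTotalDegree w (Polynomial.aeval p g) := by
    rw [weightedTotalDegree_aeval]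
    exact h.trans_le (Nat.le_mul_of_pos_left _ hg)
  rw [weightedTotalDegree_add_eq_right_of_lt w hlt, weightedTotalDegree_aeval]

theorem weightedTotalDegree_lt_add_aeval {u v : MvPolynomial σ R} {g : Polynomial R}
    (hu : 0 < weightedTotalDegree w u) (hv : v.totalDegree ≤ 1) (hg : 1 < g.natDegree) :
    weightedTotalDegree w u < weightedTotalDegree w (v + Polynomial.aeval u g) := by
  have hgu : weightedTotalDegree w u < g.natDegree * weightedTotalDegree w u :=
    lt_mul_of_one_lt_left hu hg
  by_cases hvu : weightedTotalDegree w v < g.natDegree * weightedTotalDegree w u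
  · rwa [weightedTotalDegree_add_eq_right_of_lt w (by rwa [weightedTotalDegree_aeval]),
      weightedTotalDegree_aeval]
  have huv : weightedTotalDegree w u < weightedTotalDegree w v := hgu.trans_le (not_lt.1 hvu)
  obtain ⟨i, hi, hwi⟩ := exists_single_mem_support_of_totalDegree_le_one hv (hu.trans huv)
  have hui : weightedTotalDegree w u < w i := hwi ▸ huv
  have hgi : coeff (Finsupp.single i 1) (Polynomial.aeval u g) = 0 := by
    refine coeff_single_eq_zero_of_mem_supported_compl (Algebra.adjoin_singleton_le
      (mem_supported_compl_of_weightedTotalDegree_lt hui) ?_)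
    rw [Algebra.adjoin_singleton_eq_range_aeval]
    exact ⟨g, rfl⟩
  have hmem : Finsupp.single i 1 ∈ (v + Polynomial.aeval u g).support := by
    rwa [mem_support_iff, coeff_add, hgi, add_zero, ← mem_support_iff]
  calc weightedTotalDegree w u < w i := hui
    _ = Finsupp.weight w (Finsupp.single i 1) := by rw [Finsupp.weight_single, one_smul]
    _ ≤ _ := le_weightedTotalDegree w hmem

end Domain

end MvPolynomial

theorem pcomp_lowerT (g : Polynomial ℂ) (P : PolyMap) :
    pcomp (lowerT g) P = (P.1, P.2 + Polynomial.aeval P.1 g) := by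
  simp [pcomp, lowerT, ← Polynomial.aeval_algHom_apply]

theorem pcomp_upperT (g : Polynomial ℂ) (P : PolyMap) :
    pcomp (upperT g) P = (P.1 + Polynomial.aeval P.2 g, P.2) := by
  simp [pcomp, upperT, ← Polynomial.aeval_algHom_apply]

theorem wdeg_eq_weightedTotalDegree (w1 w2 : ℕ) :
    wdeg w1 w2 = weightedTotalDegree ![w1, w2] := by
  funext p
  simp [wdeg, weightedTotalDegree, Finsupp.weight_apply, Finsupp.sum_fintype, Fin.sum_univ_two,
    mul_comm]

section Chain

variable {L1 : PolyMap} {f : ℕ → Polynomial ℂ}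

theorem chain_succ_of_even {m : ℕ} (hm : m % 2 = 0) :
    chain L1 f (m + 1) = ((chain L1 f m).1,
      (chain L1 f m).2 + Polynomial.aeval (chain L1 f m).1 (f (m + 1))) := by
  rw [chain, if_pos hm, pcomp_lowerT]

theorem chain_succ_of_odd {m : ℕ} (hm : m % 2 = 1) :
    chain L1 f (m + 1) = ((chain L1 f m).1 + Polynomial.aeval (chain L1 f m).2 (f (m + 1)),
      (chain L1 f m).2) := by
  rw [chain, if_neg (by omega), pcomp_upperT]

variable {w : Fin 2 → ℕ}

theorem weightedTotalDegree_chain_one_lt (hw : ∀ i, w i ≠ 0) (hu : L1.1.totalDegree = 1)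
    (hv : L1.2.totalDegree ≤ 1) (hf : 1 < (f 1).natDegree) :
    weightedTotalDegree w (chain L1 f 1).1 < weightedTotalDegree w (chain L1 f 1).2 := by
  rw [chain_succ_of_even rfl]
  exact weightedTotalDegree_lt_add_aeval (weightedTotalDegree_pos hw (by simp [chain, hu])) hv hf

variable {l : ℕ}
  (h₁ : weightedTotalDegree w (chain L1 f 1).1 < weightedTotalDegree w (chain L1 f 1).2)
  (hf : ∀ i, 2 ≤ i → i ≤ l → 1 < (f i).natDegree)
include h₁ hf

theorem weightedTotalDegree_chain {m : ℕ} (hm : 1 ≤ m) (hml : m ≤ l) :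
    (m % 2 = 1 →
      weightedTotalDegree w (chain L1 f m).1 < weightedTotalDegree w (chain L1 f m).2 ∧
      weightedTotalDegree w (chain L1 f m).2 =
        weightedTotalDegree w (chain L1 f 1).2 * ∏ i ∈ Finset.Icc 2 m, (f i).natDegree) ∧
    (m % 2 = 0 →
      weightedTotalDegree w (chain L1 f m).2 < weightedTotalDegree w (chain L1 f m).1 ∧
      weightedTotalDegree w (chain L1 f m).1 =
        weightedTotalDegree w (chain L1 f 1).2 * ∏ i ∈ Finset.Icc 2 m, (f i).natDegree) := by
  induction m, hm using Nat.le_induction with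
  | base => exact ⟨fun _ => ⟨h₁, by simp⟩, fun h => absurd h (by norm_num)⟩
  | succ m hm ih =>
    have hg := hf (m + 1) (by omega) hml
    have hprod : ∏ i ∈ Finset.Icc 2 (m + 1), (f i).natDegree =
        (f (m + 1)).natDegree * ∏ i ∈ Finset.Icc 2 m, (f i).natDegree := by
      rw [Finset.prod_Icc_succ_top (by omega), mul_comm]
    rcases Nat.mod_two_eq_zero_or_one m with hpar | hpar
    · obtain ⟨hlt, hdeg⟩ := (ih (by omega)).2 hpar
      have hnew := weightedTotalDegree_add_aeval_of_lt hlt (g := f (m + 1)) (by omega)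
      refine ⟨fun _ => ?_, fun h => by omega⟩
      simp only [chain_succ_of_even hpar, hnew]
      exact ⟨lt_mul_of_one_lt_left (by omega) hg, by rw [hprod, hdeg, mul_left_comm]⟩
    · obtain ⟨hlt, hdeg⟩ := (ih (by omega)).1 hpar
      have hnew := weightedTotalDegree_add_aeval_of_lt hlt (g := f (m + 1)) (by omega)
      refine ⟨fun h => by omega, fun _ => ?_⟩
      simp only [chain_succ_of_odd hpar, hnew]
      exact ⟨lt_mul_of_one_lt_left (by omega) hg, by rw [hprod, hdeg, mul_left_comm]⟩

theorem weightedBidegree_chain_of_even (hl : 2 ≤ l) (he : l % 2 = 0) :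
    (weightedTotalDegree w (chain L1 f l).1, weightedTotalDegree w (chain L1 f l).2) =
      (weightedTotalDegree w (chain L1 f 1).2 * ∏ i ∈ Finset.Icc 2 l, (f i).natDegree,
       weightedTotalDegree w (chain L1 f 1).2 * ∏ i ∈ Finset.Icc 2 (l - 1), (f i).natDegree) := by
  obtain ⟨n, rfl⟩ : ∃ n, l = n + 1 := ⟨l - 1, by omega⟩
  have hn : n % 2 = 1 := by omega
  have hlast := ((weightedTotalDegree_chain h₁ hf (by omega) le_rfl).2 he).2
  have hprev := ((weightedTotalDegree_chain h₁ hf (by omega) (by omega)).1 hn).2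
  simp only [chain_succ_of_odd hn] at hlast ⊢
  simp only [hlast, hprev, Nat.add_sub_cancel]

theorem weightedBidegree_chain_of_odd (hl : 2 ≤ l) (ho : l % 2 = 1) :
    (weightedTotalDegree w (chain L1 f l).1, weightedTotalDegree w (chain L1 f l).2) =
      (weightedTotalDegree w (chain L1 f 1).2 * ∏ i ∈ Finset.Icc 2 (l - 1), (f i).natDegree,
       weightedTotalDegree w (chain L1 f 1).2 * ∏ i ∈ Finset.Icc 2 l, (f i).natDegree) := by
  obtain ⟨n, rfl⟩ : ∃ n, l = n + 1 := ⟨l - 1, by omega⟩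
  have hn : n % 2 = 0 := by omega
  have hlast := ((weightedTotalDegree_chain h₁ hf (by omega) le_rfl).1 ho).2
  have hprev := ((weightedTotalDegree_chain h₁ hf (by omega) (by omega)).2 hn).2
  simp only [chain_succ_of_even hn] at hlast ⊢
  simp only [hlast, hprev, Nat.add_sub_cancel]

end Chain

theorem stmt_14_general (w1 w2 : ℕ) (hw1 : 0 < w1) (hw2 : 0 < w2) (L1 : PolyMap)
    (hL1 : IsAffineAut L1) (f : ℕ → Polynomial ℂ) (l : ℕ) (hl : 2 ≤ l)
    (hf : ∀ i, 1 ≤ i → i ≤ l → 1 < (f i).natDegree)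
    (k2 : ℕ) (hk2 : k2 = wdeg w1 w2 (chain L1 f 1).2) :
    ((l = 2) →
      (wdeg w1 w2 (chain L1 f l).1, wdeg w1 w2 (chain L1 f l).2)
        = (k2 * (f 2).natDegree, k2)) ∧
    ((2 < l ∧ l % 2 = 0) →
      (wdeg w1 w2 (chain L1 f l).1, wdeg w1 w2 (chain L1 f l).2)
        = (k2 * ∏ i ∈ Finset.Icc 2 l, (f i).natDegree,
           k2 * ∏ i ∈ Finset.Icc 2 (l - 1), (f i).natDegree)) ∧
    ((2 < l ∧ l % 2 = 1) →
      (wdeg w1 w2 (chain L1 f l).1, wdeg w1 w2 (chain L1 f l).2)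
        = (k2 * ∏ i ∈ Finset.Icc 2 (l - 1), (f i).natDegree,
           k2 * ∏ i ∈ Finset.Icc 2 l, (f i).natDegree)) := by
  have hw : ∀ i, ![w1, w2] i ≠ 0 := by
    simp only [Fin.forall_fin_two, Matrix.cons_val_zero, Matrix.cons_val_one]
    omega
  have h₁ := weightedTotalDegree_chain_one_lt hw hL1.2.1 hL1.2.2.le (hf 1 le_rfl (by omega))
  have hf₂ : ∀ i, 2 ≤ i → i ≤ l → 1 < (f i).natDegree := fun i hi => hf i (by omega)
  subst hk2
  simp only [wdeg_eq_weightedTotalDegree]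
  refine ⟨fun h2 => ?_, fun ⟨_, he⟩ => weightedBidegree_chain_of_even h₁ hf₂ hl he,
    fun ⟨_, ho⟩ => weightedBidegree_chain_of_odd h₁ hf₂ hl ho⟩
  subst h2
  simpa using weightedBidegree_chain_of_even h₁ hf₂ le_rfl rfl

/-- Weighted bidegree of `T_l ∘ ⋯ ∘ T_1 ∘ L1` (`l ≥ 2`) in terms of
`(k1, k2) = wbideg (T_1 ∘ L1)` and the products of the degrees `deg f_i`. -/
theorem stmt_14 (w1 w2 : ℕ) (hw1 : 0 < w1) (hw2 : 0 < w2) (L1 : PolyMap)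
    (hL1 : IsAffineAut L1) (f : ℕ → Polynomial ℂ) (l : ℕ) (hl : 2 ≤ l)
    (hf : ∀ i, 1 ≤ i → i ≤ l → 1 < (f i).natDegree)
    (k1 k2 : ℕ) (hk1 : k1 = wdeg w1 w2 (chain L1 f 1).1)
    (hk2 : k2 = wdeg w1 w2 (chain L1 f 1).2) :
    ((l = 2) →
      (wdeg w1 w2 (chain L1 f l).1, wdeg w1 w2 (chain L1 f l).2)
        = (k2 * (f 2).natDegree, k2)) ∧
    ((2 < l ∧ l % 2 = 0) →
      (wdeg w1 w2 (chain L1 f l).1, wdeg w1 w2 (chain L1 f l).2)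
        = (k2 * ∏ i ∈ Finset.Icc 2 l, (f i).natDegree,
           k2 * ∏ i ∈ Finset.Icc 2 (l - 1), (f i).natDegree)) ∧
    ((2 < l ∧ l % 2 = 1) →
      (wdeg w1 w2 (chain L1 f l).1, wdeg w1 w2 (chain L1 f l).2)
        = (k2 * ∏ i ∈ Finset.Icc 2 (l - 1), (f i).natDegree,
           k2 * ∏ i ∈ Finset.Icc 2 l, (f i).natDegree)) :=
  stmt_14_general w1 w2 hw1 hw2 L1 hL1 f l hl hf k2 hk2
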